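/- Let d ≥ 1, α ∈ (0, β), β ∈ (0, d+2]. There exists a constant N = N(d, α, β) such that for every measurable f ≥ 0 on ℝ^{d+1} one has the pointwise inequality P_α f ≤ N (M_β f)^{α/β} (M f)^{1-α/β} on ℝ^{d+1}. -/

import Mathlib

open MeasureTheory Set ENNReal Filter

noncomputable section

/-- Euclidean space `ℝ^d`. -/
abbrev Ed (d : ℕ) := EuclideanSpace ℝ (Fin d)

/-- Points of `ℝ^{d+1}`: `z = (t, x)`. -/
abbrev Pt (d : ℕ) := ℝ × Ed d

/-- The parabolic cylinder `C_ρ(t,x)`. -/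
def pCyl (d : ℕ) (ρ : ℝ) (z : Pt d) : Set (Pt d) :=
  {w | dist z.2 w.2 < ρ ∧ z.1 ≤ w.1 ∧ w.1 < z.1 + ρ ^ 2}

/-- The average `⨍_{C_ρ(z)} f`. -/
def pAvg (d : ℕ) (ρ : ℝ) (z : Pt d) (f : Pt d → ℝ≥0∞) : ℝ≥0∞ :=
  (volume (pCyl d ρ z))⁻¹ * ∫⁻ w in pCyl d ρ z, f w

/-- The fractional maximal function `M_β f`. -/
def Mbeta (d : ℕ) (β : ℝ) (f : Pt d → ℝ≥0∞) (z : Pt d) : ℝ≥0∞ :=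
  ⨆ (ρ : ℝ) (_ : 0 < ρ), ENNReal.ofReal (ρ ^ β) * pAvg d ρ z f

/-- The kernel `p_α(s, r)`. -/
def pKer (d : ℕ) (α : ℝ) (s r : ℝ) : ℝ≥0∞ :=
  if 0 < s then ENNReal.ofReal (s ^ (-(((d : ℝ) + 2 - α) / 2)) * Real.exp (-(r ^ 2) / s)) else 0

/-- The parabolic potential `P_α f`. -/
def Palpha (d : ℕ) (α : ℝ) (f : Pt d → ℝ≥0∞) (z : Pt d) : ℝ≥0∞ :=
  ∫⁻ w : Pt d, pKer d α w.1 ‖w.2‖ * f (z.1 + w.1, z.2 + w.2)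

/-- The parabolic Morrey norm `‖f‖_{E_{p,β}(Q)}`. -/
def MorreyNorm (d : ℕ) (p β : ℝ) (Q : Set (Pt d)) (f : Pt d → ℝ≥0∞) : ℝ≥0∞ :=
  ⨆ (ρ : ℝ) (_ : 0 < ρ) (z : Pt d) (_ : z ∈ Q),
    ENNReal.ofReal (ρ ^ β) * (pAvg d ρ z fun w => Q.indicator f w ^ p) ^ (1 / p)

/-- The `L_p`-norm on `ℝ^{d+1}`. -/
def LpNormE (d : ℕ) (p : ℝ) (f : Pt d → ℝ≥0∞) : ℝ≥0∞ :=
  (∫⁻ z : Pt d, f z ^ p) ^ (1 / p)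

/-- The mixed norm `‖f‖_{L_{q₁,q₂}}`. -/
def MixedNorm (d : ℕ) (q₁ q₂ : ℝ) (f : Pt d → ℝ≥0∞) : ℝ≥0∞ :=
  (∫⁻ t : ℝ, (∫⁻ x : Ed d, f (t, x) ^ q₁) ^ (q₂ / q₁)) ^ (1 / q₂)

/-- The normalized mixed norm `‖f‖_{L_{q₁,q₂}(Γ)}`. -/
def MixedNormOn (d : ℕ) (q₁ q₂ : ℝ) (Γ : Set (Pt d)) (f : Pt d → ℝ≥0∞) : ℝ≥0∞ :=
  (MixedNorm d q₁ q₂ (Γ.indicator 1))⁻¹ * MixedNorm d q₁ q₂ (Γ.indicator f)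

/-- The mixed-norm parabolic Morrey norm `‖f‖_{E_{q₁,q₂,β}(Q)}`. -/
def MixedMorrey (d : ℕ) (q₁ q₂ β : ℝ) (Q : Set (Pt d)) (f : Pt d → ℝ≥0∞) : ℝ≥0∞ :=
  ⨆ (ρ : ℝ) (_ : 0 < ρ) (z : Pt d) (_ : z ∈ Q),
    ENNReal.ofReal (ρ ^ β) * MixedNormOn d q₁ q₂ (pCyl d ρ z) (Q.indicator f)

/-- The symmetric parabolic maximal function `M̂ f`. -/
def pMax (d : ℕ) (f : Pt d → ℝ≥0∞) (z : Pt d) : ℝ≥0∞ :=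
  ⨆ (r : ℝ) (_ : 0 < r) (w : Pt d) (_ : z ∈ pCyl d r w), pAvg d r w f

/-- The time derivative `∂_t u`. -/
def timeDeriv (d : ℕ) (u : Pt d → ℝ) (z : Pt d) : ℝ :=
  fderiv ℝ u z ((1 : ℝ), (0 : Ed d))

/-- The spatial partial derivative `D_i u`. -/
def spDeriv (d : ℕ) (i : Fin d) (u : Pt d → ℝ) (z : Pt d) : ℝ :=
  fderiv ℝ u z ((0 : ℝ), EuclideanSpace.single i (1 : ℝ))

/-- The Euclidean norm of the spatial gradient `|Du|`. -/
def gradNorm (d : ℕ) (u : Pt d → ℝ) (z : Pt d) : ℝ :=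
  Real.sqrt (∑ i : Fin d, spDeriv d i u z ^ 2)

/-- The spatial Laplacian `Δu`. -/
def lap (d : ℕ) (u : Pt d → ℝ) (z : Pt d) : ℝ :=
  ∑ i : Fin d, spDeriv d i (spDeriv d i u) z

/-- The (Frobenius) norm of the spatial Hessian `|D²u|`. -/
def hessNorm (d : ℕ) (u : Pt d → ℝ) (z : Pt d) : ℝ :=
  Real.sqrt (∑ i : Fin d, ∑ j : Fin d, spDeriv d i (spDeriv d j u) z ^ 2)



/-!
With `k = (d+2-α)/2`, the bound `v^k e^(-v) ≤ k^k` shows that `p_α(s, |y|) ≤ C 2^(n(α-d-2))`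
when `s > 0` and `max(s, |y|²) ≥ 4^(n-1)`, and such `(s, y)` can be taken in `C_{2^n}(0)`.
Hence `p_α ≤ C Σₙ 2^(n(α-d-2)) 1_{C_{2^n}(0)}`, and since `|C_{2^n}| ≈ 2^(n(d+2))`,
`P_α f(z) ≲ Σₙ 2^(nα) uₙ`, where `uₙ` is the average of `f` over `C_{2^n}(z)`.
Each `uₙ` is at most `M f(z)` and at most `2^(-nβ) M_β f(z)`. Using the first bound below the
scale `2^m ≈ (M_β f(z) / M f(z))^(1/β)` where the two bounds cross and the second above it,
both parts are geometric series dominated by `(M_β f)^(α/β) (M f)^(1-α/β)`.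
-/

instance (d : ℕ) : (volume : Measure (Pt d)).IsAddLeftInvariant := by
  rw [Measure.volume_eq_prod]; infer_instance

section Cylinders

variable {d : ℕ}

lemma pCyl_eq_prod (ρ : ℝ) (z : Pt d) :
    pCyl d ρ z = Ico z.1 (z.1 + ρ ^ 2) ×ˢ Metric.ball z.2 ρ := by
  ext w
  simp only [pCyl, mem_ofPred_eq, mem_prod, mem_Ico, Metric.mem_ball, dist_comm]
  tauto

lemma measurableSet_pCyl (ρ : ℝ) (z : Pt d) : MeasurableSet (pCyl d ρ z) := by
  rw [pCyl_eq_prod]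
  exact measurableSet_Ico.prod Metric.isOpen_ball.measurableSet

lemma volume_pCyl {ρ : ℝ} (hρ : 0 < ρ) (z : Pt d) :
    volume (pCyl d ρ z) = ENNReal.ofReal (ρ ^ (d + 2)) * volume (Metric.ball (0 : Ed d) 1) := by
  rw [pCyl_eq_prod, Measure.volume_eq_prod, Measure.prod_prod, Real.volume_Ico, add_sub_cancel_left,
    Measure.addHaar_ball_of_pos volume z.2 hρ, finrank_euclideanSpace_fin, ← mul_assoc,
    ← ENNReal.ofReal_mul (by positivity), ← pow_add, add_comm]

lemma volume_pCyl_pos {ρ : ℝ} (hρ : 0 < ρ) (z : Pt d) : 0 < volume (pCyl d ρ z) := by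
  rw [volume_pCyl hρ]
  exact ENNReal.mul_pos (ENNReal.ofReal_pos.2 (by positivity)).ne'
    (Metric.measure_ball_pos _ _ one_pos).ne'

lemma volume_pCyl_ne_top {ρ : ℝ} (hρ : 0 < ρ) (z : Pt d) : volume (pCyl d ρ z) ≠ ⊤ := by
  rw [volume_pCyl hρ]
  exact ENNReal.mul_ne_top ENNReal.ofReal_ne_top measure_ball_lt_top.ne

lemma volume_mul_pAvg {ρ : ℝ} (hρ : 0 < ρ) (z : Pt d) (f : Pt d → ℝ≥0∞) :
    volume (pCyl d ρ z) * pAvg d ρ z f = ∫⁻ w in pCyl d ρ z, f w := by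
  rw [pAvg, ← mul_assoc, ENNReal.mul_inv_cancel (volume_pCyl_pos hρ z).ne'
    (volume_pCyl_ne_top hρ z), one_mul]

lemma preimage_add_pCyl (ρ : ℝ) (z : Pt d) : (z + ·) ⁻¹' pCyl d ρ z = pCyl d ρ 0 := by
  ext w
  simp [pCyl]

lemma lintegral_indicator_pCyl_mul_add (ρ : ℝ) (z : Pt d) (f : Pt d → ℝ≥0∞) :
    ∫⁻ w, (pCyl d ρ 0).indicator 1 w * f (z + w) = ∫⁻ w in pCyl d ρ z, f w := by
  rw [← (measurePreserving_add_left volume z).setLIntegral_comp_preimage_emb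
    (measurableEmbedding_addLeft z), preimage_add_pCyl,
    ← lintegral_indicator (measurableSet_pCyl ρ 0)]
  congr 1
  ext w
  by_cases hw : w ∈ pCyl d ρ 0 <;> simp [hw]

lemma ofReal_rpow_mul_pAvg_le_Mbeta (β : ℝ) {ρ : ℝ} (hρ : 0 < ρ) (z : Pt d) (f : Pt d → ℝ≥0∞) :
    ENNReal.ofReal (ρ ^ β) * pAvg d ρ z f ≤ Mbeta d β f z :=
  le_iSup₂ (f := fun ρ (_ : 0 < ρ) => ENNReal.ofReal (ρ ^ β) * pAvg d ρ z f) ρ hρ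

lemma pAvg_le_Mbeta_zero {ρ : ℝ} (hρ : 0 < ρ) (z : Pt d) (f : Pt d → ℝ≥0∞) :
    pAvg d ρ z f ≤ Mbeta d 0 f z := by
  simpa using ofReal_rpow_mul_pAvg_le_Mbeta 0 hρ z f

end Cylinders

section Dyadic

lemma ofReal_two_zpow_rpow (n : ℤ) (γ : ℝ) :
    ENNReal.ofReal (((2 : ℝ) ^ n) ^ γ) = 2 ^ ((n : ℝ) * γ) := by
  rw [← Real.rpow_intCast, ← Real.rpow_mul zero_le_two, ← ENNReal.ofReal_rpow_of_pos two_pos,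
    ENNReal.ofReal_ofNat]

lemma two_rpow_add_natCast_mul (x γ : ℝ) (j : ℕ) :
    (2 : ℝ≥0∞) ^ (x + j * γ) = 2 ^ x * (2 ^ γ) ^ j := by
  rw [ENNReal.rpow_add _ _ two_ne_zero ofNat_ne_top, mul_comm (j : ℝ), ENNReal.rpow_mul,
    ENNReal.rpow_natCast]

lemma tsum_int_eq_tsum_sub_add_tsum_add (g : ℤ → ℝ≥0∞) (m : ℤ) :
    ∑' n, g n = ∑' j : ℕ, g (m - j) + ∑' j : ℕ, g (m + 1 + j) := by
  rw [← (Equiv.addLeft (m + 1)).tsum_eq,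
    tsum_of_nat_of_neg_add_one ENNReal.summable ENNReal.summable, add_comm]
  congr 2 with j
  simp only [Equiv.coe_addLeft]
  congr 1
  ring

variable {α β : ℝ}

lemma tsum_two_rpow_mul_le {u : ℤ → ℝ≥0∞} {A B : ℝ≥0∞} (hA : ∀ n, u n ≤ A)
    (hB : ∀ n : ℤ, 2 ^ ((n : ℝ) * β) * u n ≤ B) (m : ℤ) :
    ∑' n : ℤ, (2 : ℝ≥0∞) ^ ((n : ℝ) * α) * u n ≤
      2 ^ ((m : ℝ) * α) * A * (1 - 2 ^ (-α))⁻¹ +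
        2 ^ (((m : ℝ) + 1) * (α - β)) * B * (1 - 2 ^ (α - β))⁻¹ := by
  rw [tsum_int_eq_tsum_sub_add_tsum_add _ m, ← ENNReal.tsum_geometric, ← ENNReal.tsum_geometric,
    ← ENNReal.tsum_mul_left, ← ENNReal.tsum_mul_left]
  refine add_le_add (ENNReal.tsum_le_tsum fun j => ?_) (ENNReal.tsum_le_tsum fun j => ?_)
  · have hexp : ((m - j : ℤ) : ℝ) * α = m * α + j * (-α) := by push_cast; ring
    rw [hexp, two_rpow_add_natCast_mul, mul_right_comm]
    gcongr
    exact hA _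
  · have hexp : ((m + 1 + j : ℤ) : ℝ) * α =
        ((m + 1) * (α - β) + j * (α - β)) + (m + 1 + j) * β := by
      push_cast; ring
    rw [hexp, ENNReal.rpow_add _ _ two_ne_zero ofNat_ne_top, two_rpow_add_natCast_mul,
      mul_right_comm _ B]
    exact (mul_assoc _ _ _).trans_le (mul_le_mul_right (by exact_mod_cast hB (m + 1 + j)) _)

lemma exists_two_rpow_mul_le_lt (hβ : 0 < β) {A B : ℝ≥0∞} (hA₀ : A ≠ 0) (hA : A ≠ ⊤) (hB₀ : B ≠ 0)
    (hB : B ≠ ⊤) : ∃ m : ℤ, 2 ^ ((m : ℝ) * β) * A ≤ B ∧ B < 2 ^ (((m : ℝ) + 1) * β) * A := by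
  obtain ⟨m, hm⟩ := ENNReal.exists_mem_Ico_zpow (ENNReal.div_pos hB₀ hA).ne'
    (ENNReal.div_ne_top hB hA₀) (ENNReal.one_lt_rpow one_lt_two hβ)
    (ENNReal.rpow_ne_top_of_nonneg hβ.le ofNat_ne_top)
  have hpow : ∀ n : ℤ, ((2 : ℝ≥0∞) ^ β) ^ n = 2 ^ ((n : ℝ) * β) := fun n => by
    rw [← ENNReal.rpow_intCast, ← ENNReal.rpow_mul, mul_comm]
  refine ⟨m, ?_, ?_⟩
  · rw [← ENNReal.le_div_iff_mul_le (Or.inl hA₀) (Or.inl hA), ← hpow]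
    exact hm.1
  · have hlt := hm.2
    rw [hpow] at hlt
    push_cast at hlt
    rwa [← ENNReal.div_lt_iff (Or.inl hA₀) (Or.inl hA)]

lemma rpow_mul_le_rpow_mul_rpow_of_mul_le {c A B : ℝ≥0∞} {θ : ℝ} (hθ : 0 ≤ θ) (hA₀ : A ≠ 0)
    (hA : A ≠ ⊤) (h : c * A ≤ B) : c ^ θ * A ≤ B ^ θ * A ^ (1 - θ) := by
  calc c ^ θ * A = c ^ θ * (A ^ θ * A ^ (1 - θ)) := by
        rw [← ENNReal.rpow_add _ _ hA₀ hA, add_sub_cancel, ENNReal.rpow_one]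
    _ = (c * A) ^ θ * A ^ (1 - θ) := by rw [ENNReal.mul_rpow_of_nonneg _ _ hθ, mul_assoc]
    _ ≤ B ^ θ * A ^ (1 - θ) := by gcongr

lemma tsum_two_rpow_mul_le_rpow_mul_rpow (hα : 0 ≤ α) (hαβ : α < β) {u : ℤ → ℝ≥0∞}
    {A B : ℝ≥0∞} (hA₀ : A ≠ 0) (hAt : A ≠ ⊤) (hB₀ : B ≠ 0) (hBt : B ≠ ⊤) (hA : ∀ n, u n ≤ A)
    (hB : ∀ n : ℤ, 2 ^ ((n : ℝ) * β) * u n ≤ B) :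
    ∑' n : ℤ, (2 : ℝ≥0∞) ^ ((n : ℝ) * α) * u n ≤
      ((1 - 2 ^ (-α))⁻¹ + (1 - 2 ^ (α - β))⁻¹) * (B ^ (α / β) * A ^ (1 - α / β)) := by
  have hβ : 0 < β := hα.trans_lt hαβ
  obtain ⟨m, hmA, hmB⟩ := exists_two_rpow_mul_le_lt hβ hA₀ hAt hB₀ hBt
  have h₁ : 2 ^ ((m : ℝ) * α) * A ≤ B ^ (α / β) * A ^ (1 - α / β) := by
    have := rpow_mul_le_rpow_mul_rpow_of_mul_le (div_nonneg hα hβ.le) hA₀ hAt hmA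
    rwa [← ENNReal.rpow_mul, mul_assoc, mul_div_cancel₀ _ hβ.ne'] at this
  have h₂ : 2 ^ (((m : ℝ) + 1) * (α - β)) * B ≤ B ^ (α / β) * A ^ (1 - α / β) := by
    have hle : (2 ^ (((m : ℝ) + 1) * β))⁻¹ * B ≤ A := by
      rw [ENNReal.inv_mul_le_iff (by simp) (by simp)]
      exact hmB.le
    have := rpow_mul_le_rpow_mul_rpow_of_mul_le (sub_nonneg.2 ((div_le_one hβ).2 hαβ.le))
      hB₀ hBt hle
    rwa [← ENNReal.rpow_neg, ← ENNReal.rpow_mul, _root_.sub_sub_cancel, mul_comm (A ^ _),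
      show -(((m : ℝ) + 1) * β) * (1 - α / β) = ((m : ℝ) + 1) * (α - β) by field_simp; ring]
      at this
  calc ∑' n : ℤ, (2 : ℝ≥0∞) ^ ((n : ℝ) * α) * u n
      ≤ 2 ^ ((m : ℝ) * α) * A * (1 - 2 ^ (-α))⁻¹ +
          2 ^ (((m : ℝ) + 1) * (α - β)) * B * (1 - 2 ^ (α - β))⁻¹ := tsum_two_rpow_mul_le hA hB m
    _ ≤ B ^ (α / β) * A ^ (1 - α / β) * (1 - 2 ^ (-α))⁻¹ +
          B ^ (α / β) * A ^ (1 - α / β) * (1 - 2 ^ (α - β))⁻¹ := by gcongr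
    _ = _ := by rw [← mul_add, mul_comm]

theorem exists_tsum_two_rpow_mul_le (hα : 0 < α) (hαβ : α < β) :
    ∃ K : ℝ≥0∞, K ≠ ⊤ ∧ ∀ (u : ℤ → ℝ≥0∞) (A B : ℝ≥0∞), (∀ n, u n ≤ A) →
      (∀ n : ℤ, 2 ^ ((n : ℝ) * β) * u n ≤ B) →
        ∑' n : ℤ, (2 : ℝ≥0∞) ^ ((n : ℝ) * α) * u n ≤ K * (B ^ (α / β) * A ^ (1 - α / β)) := by
  have hθ : 0 < α / β := div_pos hα (hα.trans hαβ)
  have hθ' : 0 < 1 - α / β := sub_pos.2 ((div_lt_one (hα.trans hαβ)).2 hαβ)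
  have hinv : ∀ γ : ℝ, γ < 0 → (1 - (2 : ℝ≥0∞) ^ γ)⁻¹ ≠ ⊤ := fun γ hγ =>
    ENNReal.inv_ne_top.2 (tsub_pos_of_lt (ENNReal.rpow_lt_one_of_one_lt_of_neg one_lt_two hγ)).ne'
  set K := (1 - (2 : ℝ≥0∞) ^ (-α))⁻¹ + (1 - 2 ^ (α - β))⁻¹
  have hK₀ : K ≠ 0 := by simp [K]
  refine ⟨K, ENNReal.add_ne_top.2 ⟨hinv _ (by linarith), hinv _ (by linarith)⟩,
    fun u A B hA hB => ?_⟩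
  rcases eq_or_ne A 0 with rfl | hA₀
  · simp [nonpos_iff_eq_zero.1 (hA _)]
  rcases eq_or_ne B 0 with rfl | hB₀
  · have hu : ∀ n, u n = 0 := fun n => by
      simpa [ENNReal.rpow_eq_zero_iff] using nonpos_iff_eq_zero.1 (hB n)
    simp [hu]
  rcases eq_or_ne A ⊤ with rfl | hAt
  · rw [ENNReal.top_rpow_of_pos hθ',
      ENNReal.mul_top ((ENNReal.rpow_eq_zero_iff_of_pos hθ).not.2 hB₀), ENNReal.mul_top hK₀]
    exact le_top
  rcases eq_or_ne B ⊤ with rfl | hBt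
  · rw [ENNReal.top_rpow_of_pos hθ,
      ENNReal.top_mul ((ENNReal.rpow_eq_zero_iff_of_pos hθ').not.2 hA₀), ENNReal.mul_top hK₀]
    exact le_top
  exact tsum_two_rpow_mul_le_rpow_mul_rpow hα.le hαβ hA₀ hAt hB₀ hBt hA hB

end Dyadic

section Kernel

lemma rpow_mul_exp_neg_le {v k : ℝ} (hv : 0 ≤ v) (hk : 0 < k) :
    v ^ k * Real.exp (-v) ≤ k ^ k := by
  have hvk : (v / k) ^ k ≤ Real.exp v :=
    calc (v / k) ^ k ≤ Real.exp (v / k - 1) ^ k := by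
          gcongr
          linarith [Real.add_one_le_exp (v / k - 1)]
      _ = Real.exp (v - k) := by rw [← Real.exp_mul]; field_simp
      _ ≤ Real.exp v := Real.exp_le_exp.2 (by linarith)
  rw [Real.div_rpow hv hk.le, div_le_iff₀ (by positivity)] at hvk
  calc v ^ k * Real.exp (-v) ≤ Real.exp v * k ^ k * Real.exp (-v) := by gcongr
    _ = k ^ k := by rw [mul_right_comm, ← Real.exp_add, add_neg_cancel, Real.exp_zero, one_mul]

lemma rpow_neg_mul_exp_le {k s y R : ℝ} (hk : 0 < k) (hs : 0 < s) (hR : 0 < R)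
    (h : R ^ 2 ≤ s ∨ R ^ 2 ≤ y ^ 2) :
    s ^ (-k) * Real.exp (-(y ^ 2) / s) ≤ max 1 (k ^ k) * (R ^ 2) ^ (-k) := by
  rcases h with h | h
  · calc s ^ (-k) * Real.exp (-(y ^ 2) / s) ≤ (R ^ 2) ^ (-k) * 1 := by
          refine mul_le_mul (Real.rpow_le_rpow_of_nonpos (by positivity) h (by linarith)) ?_
            (Real.exp_pos _).le (by positivity)
          exact Real.exp_le_one_iff.2 (div_nonpos_of_nonpos_of_nonneg (by nlinarith) hs.le)
      _ ≤ max 1 (k ^ k) * (R ^ 2) ^ (-k) := by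
          rw [mul_one]
          exact le_mul_of_one_le_left (by positivity) (le_max_left _ _)
  · set v := R ^ 2 / s
    have hsv : s ^ (-k) = (R ^ 2) ^ (-k) * v ^ k := by
      rw [Real.div_rpow (by positivity) hs.le, Real.rpow_neg hs.le, Real.rpow_neg (by positivity)]
      field_simp
    calc s ^ (-k) * Real.exp (-(y ^ 2) / s) ≤ s ^ (-k) * Real.exp (-v) := by
          refine mul_le_mul_of_nonneg_left (Real.exp_le_exp.2 ?_) (by positivity)
          rw [neg_div]
          exact neg_le_neg (div_le_div_of_nonneg_right h hs.le)
      _ = (R ^ 2) ^ (-k) * (v ^ k * Real.exp (-v)) := by rw [hsv, mul_assoc]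
      _ ≤ (R ^ 2) ^ (-k) * max 1 (k ^ k) := by
          gcongr
          exact (rpow_mul_exp_neg_le (by positivity) hk).trans (le_max_right _ _)
      _ = max 1 (k ^ k) * (R ^ 2) ^ (-k) := mul_comm _ _

lemma exists_pKer_le_tsum_indicator_pCyl {d : ℕ} {α : ℝ} (hα : α < d + 2) :
    ∃ C : ℝ, ∀ w : Pt d, pKer d α w.1 ‖w.2‖ ≤
      ∑' n : ℤ, ENNReal.ofReal C * 2 ^ ((n : ℝ) * (α - (d + 2))) *
        (pCyl d (2 ^ n) 0).indicator 1 w := by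
  set k := ((d : ℝ) + 2 - α) / 2 with hk_def
  have hk : 0 < k := div_pos (by linarith) two_pos
  have hαk : α - (d + 2) = 2 * -k := by rw [hk_def]; ring
  refine ⟨max 1 (k ^ k) * 2 ^ (2 * k), fun ⟨s, y⟩ => ?_⟩
  rw [pKer]
  split_ifs with hs
  swap
  · exact zero_le
  set g := √(max s (‖y‖ ^ 2))
  have hg2 : g ^ 2 = max s (‖y‖ ^ 2) := Real.sq_sqrt (le_max_of_le_left hs.le)
  obtain ⟨m, hm, hm'⟩ :=
    exists_mem_Ico_zpow (Real.sqrt_pos.2 (lt_max_of_lt_left hs)) (_root_.one_lt_two : (1 : ℝ) < 2)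
  have hmem : (s, y) ∈ pCyl d (2 ^ (m + 1)) 0 := by
    refine ⟨?_, hs.le, ?_⟩
    · change dist 0 y < _
      rw [dist_zero_left]
      have : ‖y‖ ≤ g := Real.le_sqrt_of_sq_le (le_max_right _ _)
      linarith
    · change s < 0 + _
      have : s ≤ g ^ 2 := hg2 ▸ le_max_left _ _
      nlinarith [Real.sqrt_nonneg (max s (‖y‖ ^ 2))]
  have hbound := rpow_neg_mul_exp_le (y := ‖y‖) hk hs (zpow_pos two_pos m)
    (by rw [← le_max_iff, ← hg2]; gcongr)
  refine le_trans ?_ (ENNReal.le_tsum (m + 1))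
  rw [indicator_of_mem hmem, Pi.one_apply, mul_one, ← ofReal_two_zpow_rpow,
    ← ENNReal.ofReal_mul (by positivity)]
  refine ENNReal.ofReal_le_ofReal (hbound.trans_eq ?_)
  rw [← Real.rpow_natCast, ← Real.rpow_mul (by positivity), zpow_add_one₀ two_ne_zero,
    Real.mul_rpow (by positivity) zero_le_two, hαk]
  simp only [Nat.cast_ofNat, mul_neg]
  rw [Real.rpow_neg (by positivity), Real.rpow_neg zero_le_two]
  field_simp

end Kernel

lemma exists_Palpha_le_tsum_pAvg {d : ℕ} {α : ℝ} (hα : α < d + 2) :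
    ∃ C : ℝ≥0∞, C ≠ ⊤ ∧ ∀ f : Pt d → ℝ≥0∞, Measurable f → ∀ z : Pt d,
      Palpha d α f z ≤ C * ∑' n : ℤ, 2 ^ ((n : ℝ) * α) * pAvg d (2 ^ n) z f := by
  obtain ⟨C, hker⟩ := exists_pKer_le_tsum_indicator_pCyl hα
  set V := volume (Metric.ball (0 : Ed d) 1)
  refine ⟨ENNReal.ofReal C * V, ENNReal.mul_ne_top ENNReal.ofReal_ne_top measure_ball_lt_top.ne,
    fun f hf z => ?_⟩
  set c : ℤ → ℝ≥0∞ := fun n => ENNReal.ofReal C * 2 ^ ((n : ℝ) * (α - (d + 2)))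
  have hterm : ∀ n : ℤ, ∫⁻ w, c n * (pCyl d (2 ^ n) 0).indicator 1 w * f (z + w) =
      ENNReal.ofReal C * V * (2 ^ ((n : ℝ) * α) * pAvg d (2 ^ n) z f) := fun n => by
    have hpow : (2 : ℝ≥0∞) ^ ((n : ℝ) * (α - (d + 2))) * ENNReal.ofReal ((2 ^ n) ^ (d + 2)) =
        2 ^ ((n : ℝ) * α) := by
      rw [← Real.rpow_natCast, ofReal_two_zpow_rpow,
        ← ENNReal.rpow_add _ _ two_ne_zero ofNat_ne_top]
      push_cast
      ring_nf
    simp_rw [mul_assoc (c n)]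
    rw [lintegral_const_mul' _ _ (ENNReal.mul_ne_top ENNReal.ofReal_ne_top
        (ENNReal.rpow_ne_top_of_nonneg' two_pos ofNat_ne_top)),
      lintegral_indicator_pCyl_mul_add, ← volume_mul_pAvg (zpow_pos two_pos n),
      volume_pCyl (zpow_pos two_pos n), ← hpow]
    ring
  calc Palpha d α f z = ∫⁻ w, pKer d α w.1 ‖w.2‖ * f (z + w) := rfl
    _ ≤ ∫⁻ w, (∑' n, c n * (pCyl d (2 ^ n) 0).indicator 1 w) * f (z + w) :=
        lintegral_mono fun w => mul_le_mul_left (hker w) _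
    _ = ∑' n, ∫⁻ w, c n * (pCyl d (2 ^ n) 0).indicator 1 w * f (z + w) := by
        simp_rw [← ENNReal.tsum_mul_right]
        exact lintegral_tsum fun n =>
          (((measurable_const.indicator (measurableSet_pCyl _ 0)).const_mul _).mul
            (hf.comp (measurable_const_add z))).aemeasurable
    _ = ENNReal.ofReal C * V * ∑' n : ℤ, 2 ^ ((n : ℝ) * α) * pAvg d (2 ^ n) z f := by
        rw [tsum_congr hterm, ENNReal.tsum_mul_left]

theorem stmt2_general (d : ℕ) (α β : ℝ) (hα : 0 < α) (hαβ : α < β)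
    (hβ : β ≤ (d : ℝ) + 2) :
    ∃ N : ℝ, 0 < N ∧ ∀ f : Pt d → ℝ≥0∞, Measurable f → ∀ z : Pt d,
      Palpha d α f z ≤
        ENNReal.ofReal N * Mbeta d β f z ^ (α / β) * Mbeta d 0 f z ^ (1 - α / β) := by
  obtain ⟨C, hC, hP⟩ := exists_Palpha_le_tsum_pAvg (hαβ.trans_le hβ)
  obtain ⟨K, hK, hsum⟩ := exists_tsum_two_rpow_mul_le hα hαβ
  have hN : C * K ≤ ENNReal.ofReal ((C * K).toReal + 1) :=
    (ENNReal.le_ofReal_iff_toReal_le (ENNReal.mul_ne_top hC hK) (by positivity)).2 (by linarith)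
  refine ⟨(C * K).toReal + 1, by positivity, fun f hf z => ?_⟩
  have hρ : ∀ n : ℤ, 0 < (2 : ℝ) ^ n := fun n => zpow_pos two_pos n
  calc Palpha d α f z ≤ C * ∑' n : ℤ, 2 ^ ((n : ℝ) * α) * pAvg d (2 ^ n) z f := hP f hf z
    _ ≤ C * (K * (Mbeta d β f z ^ (α / β) * Mbeta d 0 f z ^ (1 - α / β))) := by
        refine mul_le_mul_right (hsum _ _ _ (fun n => pAvg_le_Mbeta_zero (hρ n) z f) fun n => ?_) _
        rw [← ofReal_two_zpow_rpow]
        exact ofReal_rpow_mul_pAvg_le_Mbeta β (hρ n) z f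
    _ ≤ ENNReal.ofReal ((C * K).toReal + 1) * Mbeta d β f z ^ (α / β) *
          Mbeta d 0 f z ^ (1 - α / β) := by
        rw [← mul_assoc, mul_assoc (ENNReal.ofReal _)]
        exact mul_le_mul_left hN _

/-- Lemma 2.2, (2.3): for `α ∈ (0,β)`, `β ∈ (0, d+2]` there is `N = N(d,α,β)`
such that `P_α f ≤ N (M_β f)^{α/β} (M f)^{1-α/β}` pointwise. -/
theorem stmt2 (d : ℕ) (hd : 1 ≤ d) (α β : ℝ) (hα : 0 < α) (hαβ : α < β)
    (hβ : β ≤ (d : ℝ) + 2) :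
    ∃ N : ℝ, 0 < N ∧ ∀ f : Pt d → ℝ≥0∞, Measurable f → ∀ z : Pt d,
      Palpha d α f z ≤
        ENNReal.ofReal N * Mbeta d β f z ^ (α / β) * Mbeta d 0 f z ^ (1 - α / β) :=
  stmt2_general d α β hα hαβ hβ
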